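/- Let L_3 = U^{⊕3} ⊕ E8(-1)^{⊕2} ⊕ ⟨-4⟩ and let D ∈ L_3 be a primitive vector with D² < 0 such that the dual class r = D/div(D) ∈ L_3 ⊗ ℚ satisfies r² ≥ -3. Then the pair (D², div(D)) belongs to the set {(-12, 2), (-36, 4), (-2, 1), (-4, 4), (-4, 2)}. -/

import Mathlib

/-!
Split `L_3 = K ⊕ ⟨-4⟩` with `K = U^3 ⊕ E8(-1)^2` unimodular and write `D = x + u δ`. Pairing `D`
with `K` shows `m = div(D)` divides the vector `x`, since the Gram matrix of `K` is invertible over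
`ℤ`; pairing with `δ` gives `m ∣ 4u`. Primitivity makes `m` coprime to `u`, hence `m ∣ 4`. Then
`D² = m² y² - 4u²` with `x = m y` and `y²` even, and `-3m² ≤ D² < 0` leaves only the listed
values: for even `m` the coefficient `u` is odd, so `u² ≡ 1 mod 8`.
-/

open Matrix

/-- Gram matrix of the hyperbolic plane `U`. -/
def U2 : Matrix (Fin 2) (Fin 2) ℤ := !![0, 1; 1, 0]

/-- Gram matrix of the negative definite `E8(-1)` lattice. -/
def E8neg : Matrix (Fin 8) (Fin 8) ℤ :=
  !![-2, 1, 0, 0, 0, 0, 0, 0;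
      1,-2, 1, 0, 0, 0, 0, 0;
      0, 1,-2, 1, 0, 0, 0, 0;
      0, 0, 1,-2, 1, 0, 0, 0;
      0, 0, 0, 1,-2, 1, 0, 1;
      0, 0, 0, 0, 1,-2, 1, 0;
      0, 0, 0, 0, 0, 1,-2, 0;
      0, 0, 0, 0, 1, 0, 0,-2]

/-- Index type of the unimodular summand `U^3 ⊕ E8(-1)^2`. -/
abbrev KIdx := (Fin 2 ⊕ (Fin 2 ⊕ Fin 2)) ⊕ (Fin 8 ⊕ Fin 8)

/-- Gram matrix of `U^3 ⊕ E8(-1)^2`. -/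
def GramK : Matrix KIdx KIdx ℤ :=
  Matrix.fromBlocks
    (Matrix.fromBlocks U2 0 0 (Matrix.fromBlocks U2 0 0 U2)) 0 0
    (Matrix.fromBlocks E8neg 0 0 E8neg)

/-- Index type of `L_n = U^3 ⊕ E8(-1)^2 ⊕ ⟨-(2n-2)⟩`. -/
abbrev LIdx := KIdx ⊕ Fin 1

/-- Gram matrix of `L_n = U^3 ⊕ E8(-1)^2 ⊕ ⟨-(2n-2)⟩`. -/
def GramL (n : ℕ) : Matrix LIdx LIdx ℤ :=
  Matrix.fromBlocks GramK 0 0 !![-(2 * (n : ℤ) - 2)]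

/-- The bilinear form of `L_n`. -/
def bil (n : ℕ) (v w : LIdx → ℤ) : ℤ := v ⬝ᵥ ((GramL n).mulVec w)

/-- The `ℚ`-bilinear extension of the form of `L_n` to `L_n ⊗ ℚ`. -/
def bilQ (n : ℕ) (v w : LIdx → ℚ) : ℚ :=
  v ⬝ᵥ (((GramL n).map (Int.cast : ℤ → ℚ)).mulVec w)

/-- The inclusion `L_n ↪ L_n ⊗ ℚ`. -/
def toQ (v : LIdx → ℤ) : LIdx → ℚ := fun i => (v i : ℚ)

/-- The generator `δ` of the summand `⟨-(2n-2)⟩`. -/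
def deltaVec : LIdx → ℤ := fun i => if i = Sum.inr 0 then 1 else 0

/-- A lattice vector is primitive if it is not a nontrivial multiple of
another lattice vector. -/
def IsPrimitive (v : LIdx → ℤ) : Prop :=
  ∀ (k : ℤ) (w : LIdx → ℤ), v = k • w → IsUnit k

/-- `HasDiv n v m` says that `div(v) = m`, i.e. `(v, L_n) = mℤ`. -/
def HasDiv (n : ℕ) (v : LIdx → ℤ) (m : ℤ) : Prop :=
  Ideal.span (Set.range fun w => bil n v w) = Ideal.span {m}

lemma Matrix.dotProduct_mulVec_add_self {ι R : Type*} [Fintype ι] [CommRing R]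
    {G : Matrix ι ι R} (hG : G.IsSymm) (a b : ι → R) :
    (a + b) ⬝ᵥ G *ᵥ (a + b) = a ⬝ᵥ G *ᵥ a + b ⬝ᵥ G *ᵥ b + 2 * (a ⬝ᵥ G *ᵥ b) := by
  have hba : b ⬝ᵥ G *ᵥ a = a ⬝ᵥ G *ᵥ b := by
    rw [dotProduct_mulVec, dotProduct_comm, ← hG.eq, vecMul_transpose, hG.eq]
  simp only [mulVec_add, dotProduct_add, add_dotProduct, hba]
  ring

lemma Matrix.single_dotProduct_mulVec_single {ι R : Type*} [Fintype ι] [DecidableEq ι]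
    [CommRing R] (G : Matrix ι ι R) (i : ι) (c : R) :
    Pi.single i c ⬝ᵥ G *ᵥ Pi.single i c = c * G i i * c := by
  simp only [mulVec_single, single_dotProduct]
  simp [mul_comm]

lemma Matrix.even_dotProduct_mulVec_self {ι : Type*} [Fintype ι] [DecidableEq ι]
    {G : Matrix ι ι ℤ} (hG : G.IsSymm) (hdiag : ∀ i, Even (G i i)) (x : ι → ℤ) :
    Even (x ⬝ᵥ G *ᵥ x) := by
  rw [← Finset.univ_sum_single x]
  generalize (Finset.univ : Finset ι) = s
  induction s using Finset.induction_on with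
  | empty => simp
  | insert a s ha ih =>
    rw [Finset.sum_insert ha, dotProduct_mulVec_add_self hG, single_dotProduct_mulVec_single]
    exact (((hdiag a).mul_left _).mul_right _ |>.add ih).add (even_two_mul _)

lemma bil_three_apply (v w : LIdx → ℤ) :
    bil 3 v w = (v ∘ Sum.inl) ⬝ᵥ GramK *ᵥ (w ∘ Sum.inl) - 4 * v (Sum.inr 0) * w (Sum.inr 0) := by
  simp [bil, GramL, dotProduct, mulVec, fromBlocks, Fintype.sum_sum_type]
  ring

lemma HasDiv.dvd_bil {n : ℕ} {v : LIdx → ℤ} {m : ℤ} (h : HasDiv n v m) (w : LIdx → ℤ) :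
    m ∣ bil n v w :=
  Ideal.mem_span_singleton.1 (h ▸ Ideal.subset_span ⟨w, rfl⟩)

lemma Matrix.dvd_of_dvd_vecMul {ι R : Type*} [Fintype ι] [DecidableEq ι] [CommSemiring R]
    {A B : Matrix ι ι R} (hAB : A * B = 1) {m : R} {x : ι → R} (hx : ∀ i, m ∣ (x ᵥ* A) i)
    (j : ι) : m ∣ x j := by
  rw [← vecMul_one x, ← hAB, ← vecMul_vecMul]
  exact Finset.dvd_sum fun i _ => (hx i).mul_right _

def E8negInv : Matrix (Fin 8) (Fin 8) ℤ :=
  !![-2,-3,-4,-5,-6,-4,-2,-3;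
     -3,-6,-8,-10,-12,-8,-4,-6;
     -4,-8,-12,-15,-18,-12,-6,-9;
     -5,-10,-15,-20,-24,-16,-8,-12;
     -6,-12,-18,-24,-30,-20,-10,-15;
     -4,-8,-12,-16,-20,-14,-7,-10;
     -2,-4,-6,-8,-10,-7,-4,-5;
     -3,-6,-9,-12,-15,-10,-5,-8]

lemma E8neg_mul_E8negInv : E8neg * E8negInv = 1 := by decide

lemma U2_mul_self : U2 * U2 = 1 := by decide

def GramKInv : Matrix KIdx KIdx ℤ :=
  fromBlocks (fromBlocks U2 0 0 (fromBlocks U2 0 0 U2)) 0 0 (fromBlocks E8negInv 0 0 E8negInv)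

lemma GramK_mul_GramKInv : GramK * GramKInv = 1 := by
  simp [GramK, GramKInv, fromBlocks_multiply, U2_mul_self, E8neg_mul_E8negInv, fromBlocks_one]

lemma GramK_isSymm : GramK.IsSymm := by decide

lemma even_dotProduct_GramK_mulVec_self (x : KIdx → ℤ) : Even (x ⬝ᵥ GramK *ᵥ x) :=
  even_dotProduct_mulVec_self GramK_isSymm (by decide) x

lemma HasDiv.dvd_apply_inl {v : LIdx → ℤ} {m : ℤ} (h : HasDiv 3 v m) (k : KIdx) :
    m ∣ v (Sum.inl k) := by
  refine dvd_of_dvd_vecMul GramK_mul_GramKInv (x := v ∘ Sum.inl) (fun i => ?_) k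
  have hsingle : (Pi.single (Sum.inl i) 1 : LIdx → ℤ) ∘ Sum.inl = Pi.single i 1 := by
    ext k; simp [Pi.single_apply]
  have := h.dvd_bil (Pi.single (Sum.inl i) 1)
  rw [bil_three_apply, hsingle, dotProduct_mulVec, dotProduct_single_one] at this
  simpa using this

lemma HasDiv.dvd_four_mul_apply_inr {v : LIdx → ℤ} {m : ℤ} (h : HasDiv 3 v m) :
    m ∣ 4 * v (Sum.inr 0) := by
  have hdelta : deltaVec ∘ Sum.inl = 0 := by
    ext k; simp [deltaVec]
  simpa [bil_three_apply, hdelta, deltaVec] using h.dvd_bil deltaVec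

lemma IsPrimitive.isCoprime {v : LIdx → ℤ} (hv : IsPrimitive v) {m : ℤ} {j : LIdx}
    (h : ∀ i ≠ j, m ∣ v i) : IsCoprime m (v j) := by
  have hg : ∀ i, (Int.gcd m (v j) : ℤ) ∣ v i := fun i => by
    by_cases hi : i = j
    · exact hi ▸ Int.gcd_dvd_right m (v j)
    · exact (Int.gcd_dvd_left m (v j)).trans (h i hi)
  have := Int.isUnit_iff.1 <| hv _ (fun i => v i / Int.gcd m (v j))
    (funext fun i => (Int.mul_ediv_cancel' (hg i)).symm)
  rw [Int.isCoprime_iff_gcd_eq_one]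
  omega

lemma IsPrimitive.isCoprime_apply_inr {v : LIdx → ℤ} (hv : IsPrimitive v) {m : ℤ}
    (h : HasDiv 3 v m) : IsCoprime m (v (Sum.inr 0)) :=
  hv.isCoprime fun i hi => by
    rcases i with k | j
    · exact h.dvd_apply_inl k
    · exact absurd (congrArg Sum.inr (Subsingleton.elim j 0)) hi

lemma Int.sq_emod_eight_of_odd {u : ℤ} (hu : Odd u) : u ^ 2 % 8 = 1 := by
  obtain ⟨k, rfl⟩ := hu
  obtain ⟨j, hj⟩ := Int.even_mul_succ_self k
  have : (2 * k + 1) ^ 2 = 8 * j + 1 := by linear_combination 4 * hj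
  omega

lemma IsCoprime.odd_of_two_dvd {m u : ℤ} (h : IsCoprime m u) (hm : 2 ∣ m) : Odd u := by
  rw [← Int.not_even_iff_odd, even_iff_two_dvd]
  intro hu
  have := Int.isUnit_iff.1 (h.isUnit_of_dvd' hm hu)
  omega

lemma sq_mul_even_sub_four_sq_cases {d m u e : ℤ} (hm : 0 < m) (hm4 : m ∣ 4) (hcop : IsCoprime m u)
    (he : Even e) (hd : d = m ^ 2 * e - 4 * u ^ 2) (hlo : -3 * m ^ 2 ≤ d) (hhi : d < 0) :
    (d = -12 ∧ m = 2) ∨ (d = -36 ∧ m = 4) ∨ (d = -2 ∧ m = 1) ∨ (d = -4 ∧ m = 4) ∨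
    (d = -4 ∧ m = 2) := by
  obtain ⟨t, rfl⟩ := he
  have hu : 2 ∣ m → u ^ 2 % 8 = 1 := fun h2 => Int.sq_emod_eight_of_odd (hcop.odd_of_two_dvd h2)
  have : m ≤ 4 := Int.le_of_dvd four_pos hm4
  interval_cases m
  · omega
  · have := hu (by norm_num); omega
  · norm_num at hm4
  · have := hu (by norm_num); omega

/-- in `L_3`, a primitive vector `D` with `D² < 0` whose dual class
`r = D/div(D)` satisfies `r² ≥ -3` has `(D², div(D))` in the given list. -/
theorem stmt_7 (D : LIdx → ℤ) (hprim : IsPrimitive D) (m : ℤ) (hm : 0 < m)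
    (hdiv : HasDiv 3 D m) (hneg : bil 3 D D < 0)
    (hr : (-3 : ℚ) ≤ (bil 3 D D : ℚ) / (m : ℚ) ^ 2) :
    (bil 3 D D = -12 ∧ m = 2) ∨ (bil 3 D D = -36 ∧ m = 4) ∨
    (bil 3 D D = -2 ∧ m = 1) ∨ (bil 3 D D = -4 ∧ m = 4) ∨
    (bil 3 D D = -4 ∧ m = 2) := by
  have hcop : IsCoprime m (D (Sum.inr 0)) := hprim.isCoprime_apply_inr hdiv
  have hm4 : m ∣ 4 := hcop.dvd_of_dvd_mul_right hdiv.dvd_four_mul_apply_inr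
  set w : KIdx → ℤ := fun k => D (Sum.inl k) / m
  have hw : D ∘ Sum.inl = m • w :=
    funext fun k => (Int.mul_ediv_cancel' (hdiv.dvd_apply_inl k)).symm
  have hsq : bil 3 D D = m ^ 2 * (w ⬝ᵥ GramK *ᵥ w) - 4 * D (Sum.inr 0) ^ 2 := by
    rw [bil_three_apply, hw, smul_dotProduct, mulVec_smul, dotProduct_smul]
    simp only [smul_eq_mul]
    ring
  have hlo : -3 * m ^ 2 ≤ bil 3 D D := by
    rw [le_div_iff₀ (by positivity)] at hr
    exact_mod_cast hr
  exact sq_mul_even_sub_four_sq_cases hm hm4 hcop (even_dotProduct_GramK_mulVec_self w) hsq hlo hneg
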